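/- arXiv:1607.06828 — 7 statements merged into one kernel-verified Lean document; each statement's English description precedes it below -/
import Mathlib

section
/- Let n be an integer with n ≥ 1 or n ≤ −2, let j be a real number with j ≥ 0 and (n+1)·j − n ≤ 0, and let m < 0 be real. Then 1 + |m·((n+1)·j − n)| − |m·(n·j − (n+1))| = 0 if and only if m = −1/(1 + j). -/
/-- Cancellation of the O(ℓ) terms in the quasinormal-mode pole condition:
`1 + |m((n+1)j − n)| − |m(nj − (n+1))| = 0` iff `m = −1/(1+j)`. -/
theorem stmt3 (n : ℤ) (hn : 1 ≤ n ∨ n ≤ -2) (j m : ℝ) (hj : 0 ≤ j)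
    (hj2 : ((n : ℝ) + 1) * j - (n : ℝ) ≤ 0) (hm : m < 0) :
    1 + |m * (((n : ℝ) + 1) * j - (n : ℝ))| - |m * ((n : ℝ) * j - ((n : ℝ) + 1))| = 0 ↔
      m = -1 / (1 + j) := by
  have hB : (n : ℝ) * j - ((n : ℝ) + 1) ≤ 0 := by nlinarith
  rw [abs_of_nonneg (mul_nonneg_of_nonpos_of_nonpos hm.le hj2),
      abs_of_nonneg (mul_nonneg_of_nonpos_of_nonpos hm.le hB)]
  have h1 : (0:ℝ) < 1 + j := by linarith
  constructor
  · intro h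
    field_simp
    nlinarith
  · intro h
    subst h
    field_simp
    ring
end

section
/- For the explicit 3-charge microstate metric g, at every point with r > 0, θ ∈ (0, π/2) and f(r,θ) > 0, the covector g·V (with V = (1,1,0,0,0,0) in coordinates (t,z,r,θ,ψ,φ)) has components (g·V)_t = −1/h, (g·V)_z = 1/h, (g·V)_r = 0, (g·V)_θ = 0, (g·V)_ψ = −√(Q₁Q₂)·a·η·cos²θ/(hf), (g·V)_φ = −√(Q₁Q₂)·a·η·sin²θ/(hf). Consequently g(V,V) = 0 (V is null at every such point) and g(V,Z) = 1/h > 0, so the evanescent ergosurface condition g(V,Z) = 0 fails wherever f > 0. -/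
open Real Matrix

noncomputable section

/-- Rotation length scale `a = √(Q₁Q₂)/R_z`. -/
def aP (Q₁ Q₂ Rz : ℝ) : ℝ := Real.sqrt (Q₁ * Q₂) / Rz

/-- Momentum charge `Q_p = a² n (n+1)`. -/
def QpP (Q₁ Q₂ Rz : ℝ) (n : ℤ) : ℝ := (aP Q₁ Q₂ Rz) ^ 2 * (n : ℝ) * ((n : ℝ) + 1)

/-- Charge ratio `η = Q₁Q₂/(Q₁Q₂ + Q₁Q_p + Q₂Q_p)`. -/
def etaP (Q₁ Q₂ Rz : ℝ) (n : ℤ) : ℝ :=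
  Q₁ * Q₂ / (Q₁ * Q₂ + Q₁ * QpP Q₁ Q₂ Rz n + Q₂ * QpP Q₁ Q₂ Rz n)

/-- The function `f(r,θ) = r² + a²η((n+1)cos²θ − n sin²θ)` whose vanishing locus is
the evanescent ergosurface. -/
def fP (Q₁ Q₂ Rz : ℝ) (n : ℤ) (r θ : ℝ) : ℝ :=
  r ^ 2 + (aP Q₁ Q₂ Rz) ^ 2 * etaP Q₁ Q₂ Rz n *
    (((n : ℝ) + 1) * Real.cos θ ^ 2 - (n : ℝ) * Real.sin θ ^ 2)

/-- The function `h = √((1+Q₁/f)(1+Q₂/f))`. -/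
def hP (Q₁ Q₂ Rz : ℝ) (n : ℤ) (r θ : ℝ) : ℝ :=
  Real.sqrt ((1 + Q₁ / fP Q₁ Q₂ Rz n r θ) * (1 + Q₂ / fP Q₁ Q₂ Rz n r θ))

/-- The 6d Einstein metric of the 3-charge supersymmetric microstate geometry of
Giusto–Mathur–Saxena, as a symmetric 6×6 matrix of functions of `(r,θ)` in the
coordinates `(t, z, r, θ, ψ, φ)`. -/
def metric3charge (Q₁ Q₂ Rz : ℝ) (n : ℤ) (r θ : ℝ) : Matrix (Fin 6) (Fin 6) ℝ :=
  let a := aP Q₁ Q₂ Rz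
  let Qp := QpP Q₁ Q₂ Rz n
  let η := etaP Q₁ Q₂ Rz n
  let f := fP Q₁ Q₂ Rz n r θ
  let h := hP Q₁ Q₂ Rz n r θ
  let γ₁ : ℝ := -(a * (n : ℝ))
  let γ₂ : ℝ := a * ((n : ℝ) + 1)
  let c2 := Real.cos θ ^ 2
  let s2 := Real.sin θ ^ 2
  ![![-(1/h) + Qp/(h*f), -(Qp/(h*f)), 0, 0,
      -(Real.sqrt (Q₁*Q₂) * γ₁ * c2/(h*f)), -(Real.sqrt (Q₁*Q₂) * γ₂ * s2/(h*f))],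
    ![-(Qp/(h*f)), 1/h + Qp/(h*f), 0, 0,
      (γ₁ - a*η) * Real.sqrt (Q₁*Q₂) * c2/(h*f), (γ₂ - a*η) * Real.sqrt (Q₁*Q₂) * s2/(h*f)],
    ![0, 0, h*f/(r^2 + a^2*η), 0, 0, 0],
    ![0, 0, 0, h*f, 0, 0],
    ![-(Real.sqrt (Q₁*Q₂) * γ₁ * c2/(h*f)), (γ₁ - a*η) * Real.sqrt (Q₁*Q₂) * c2/(h*f), 0, 0,
      h*(r^2 + γ₁*a*η - (γ₁^2 - γ₂^2)*η*Q₁*Q₂*c2/(h*f)^2)*c2 + Qp*a^2*η^2*c2^2/(h*f),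
      Qp*a^2*η^2*c2*s2/(h*f)],
    ![-(Real.sqrt (Q₁*Q₂) * γ₂ * s2/(h*f)), (γ₂ - a*η) * Real.sqrt (Q₁*Q₂) * s2/(h*f), 0, 0,
      Qp*a^2*η^2*c2*s2/(h*f),
      h*(r^2 + γ₂*a*η + (γ₁^2 - γ₂^2)*η*Q₁*Q₂*s2/(h*f)^2)*s2 + Qp*a^2*η^2*s2^2/(h*f)]]

/-- Components of the covector `g·V` for the supersymmetric Killing vector
`V = ∂_t + ∂_z` of the 3-charge microstate geometry: these are the conserved momenta
of the null geodesics with tangent `V`.  In particular `g(V,V) = 0` and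
`g(V,Z) = 1/h > 0` wherever `f > 0`. -/
theorem stmt5 (Q₁ Q₂ Rz : ℝ) (n : ℤ) (r θ : ℝ)
    (hQ₁ : 0 < Q₁) (hQ₂ : 0 < Q₂) (hRz : 0 < Rz)
    (hr : 0 < r) (hθ : θ ∈ Set.Ioo 0 (π/2)) (hf : 0 < fP Q₁ Q₂ Rz n r θ) :
    let g := metric3charge Q₁ Q₂ Rz n r θ
    let V : Fin 6 → ℝ := ![1, 1, 0, 0, 0, 0]
    let Z : Fin 6 → ℝ := ![0, 1, 0, 0, 0, 0]
    let h := hP Q₁ Q₂ Rz n r θ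
    let f := fP Q₁ Q₂ Rz n r θ
    let a := aP Q₁ Q₂ Rz
    let η := etaP Q₁ Q₂ Rz n
    let p := g.mulVec V
    p 0 = -(1/h) ∧ p 1 = 1/h ∧ p 2 = 0 ∧ p 3 = 0 ∧
    p 4 = -(Real.sqrt (Q₁*Q₂) * a * η * Real.cos θ ^ 2 / (h * f)) ∧
    p 5 = -(Real.sqrt (Q₁*Q₂) * a * η * Real.sin θ ^ 2 / (h * f)) ∧
    V ⬝ᵥ p = 0 ∧ Z ⬝ᵥ p = 1/h ∧ 0 < 1/h := by
  have hh : 0 < hP Q₁ Q₂ Rz n r θ := by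
    apply Real.sqrt_pos.mpr
    have h1 : 0 < 1 + Q₁ / fP Q₁ Q₂ Rz n r θ := by positivity
    have h2 : 0 < 1 + Q₂ / fP Q₁ Q₂ Rz n r θ := by positivity
    positivity
  intro g V Z h f a η p
  have v0 : V 0 = 1 := rfl
  have v1 : V 1 = 1 := rfl
  have v2 : V 2 = 0 := rfl
  have v3 : V 3 = 0 := rfl
  have v4 : V 4 = 0 := rfl
  have v5 : V 5 = 0 := rfl
  have z0 : Z 0 = 0 := rfl
  have z1 : Z 1 = 1 := rfl
  have z2 : Z 2 = 0 := rfl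
  have z3 : Z 3 = 0 := rfl
  have z4 : Z 4 = 0 := rfl
  have z5 : Z 5 = 0 := rfl
  have key : ∀ i, p i = g i 0 + g i 1 := by
    intro i
    simp [p, Matrix.mulVec, dotProduct, Fin.sum_univ_six, v0, v1, v2, v3, v4, v5]
  have h0 : p 0 = -(1/h) := by rw [key]; show (-(1/h) + QpP Q₁ Q₂ Rz n/(h*f)) + (-(QpP Q₁ Q₂ Rz n/(h*f))) = _; ring
  have h1 : p 1 = 1/h := by rw [key]; show (-(QpP Q₁ Q₂ Rz n/(h*f))) + (1/h + QpP Q₁ Q₂ Rz n/(h*f)) = _; ring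
  have h2 : p 2 = 0 := by rw [key]; show (0:ℝ) + 0 = 0; ring
  have h3 : p 3 = 0 := by rw [key]; show (0:ℝ) + 0 = 0; ring
  have h4 : p 4 = -(Real.sqrt (Q₁*Q₂) * a * η * Real.cos θ ^ 2 / (h * f)) := by
    rw [key]
    show -(Real.sqrt (Q₁*Q₂) * (-(a * (n:ℝ))) * Real.cos θ ^ 2/(h*f)) +
      ((-(a * (n:ℝ)) - a*η) * Real.sqrt (Q₁*Q₂) * Real.cos θ ^ 2/(h*f)) = _
    ring
  have h5 : p 5 = -(Real.sqrt (Q₁*Q₂) * a * η * Real.sin θ ^ 2 / (h * f)) := by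
    rw [key]
    show -(Real.sqrt (Q₁*Q₂) * (a * ((n:ℝ)+1)) * Real.sin θ ^ 2/(h*f)) +
      ((a * ((n:ℝ)+1) - a*η) * Real.sqrt (Q₁*Q₂) * Real.sin θ ^ 2/(h*f)) = _
    ring
  have hVp : V ⬝ᵥ p = 0 := by
    simp only [dotProduct, Fin.sum_univ_six, v0, v1, v2, v3, v4, v5,
      h0, h1, h2, h3, h4, h5]
    ring
  have hZp : Z ⬝ᵥ p = 1/h := by
    simp only [dotProduct, Fin.sum_univ_six, z0, z1, z2, z3, z4, z5,
      h0, h1, h2, h3, h4, h5]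
    ring
  exact ⟨h0, h1, h2, h3, h4, h5, hVp, hZp, one_div_pos.mpr hh⟩

end
end

section
/- Fix Q₁, Q₂ > 0, R_z > 0, n ∈ ℤ, and a point (r, θ) with r > 0, θ ∈ (0, π/2) and f(r,θ) > 0. If X ∈ ℝ⁶ satisfies V♭·X = 0 and there exists λ ∈ ℝ with Ω_{ab}X^b = λ·V♭_a for all indices a, then X is a scalar multiple of V = (1,1,0,0,0,0). In particular, the rotation two-form Ω of the null geodesic congruence tangent to V is non-degenerate on the quotient of the V♭-orthogonal complement by the span of V, at every such point. -/
/-!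
The two conditions decouple. Let `M` be the `3 × 3` matrix with rows `(Ω_{tr}, Ω_{rψ}, Ω_{rφ})`,
`(Ω_{tθ}, Ω_{θψ}, Ω_{θφ})` and `(V♭_z, V♭_ψ, V♭_φ)`. Then `V♭·X = 0` together with the
`r`- and `θ`-rows of `ΩX = λV♭` say `M (X^z − X^t, X^ψ, X^φ) = 0`, while the `t`-, `ψ`- and
`φ`-rows say `(X^r, X^θ, λ) M = 0`. So everything reduces to `det M ≠ 0`, and using
`sin²θ + cos²θ = 1` one finds `det M = −C² r sinθ cosθ (K/(hf) + L/h) / (2hf)`. This is nonzero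
because `K, L, h, f, r, sinθ, cosθ > 0` and `C ≠ 0`, the latter since `a > 0` and `η > 0`
(as `n(n+1) ≥ 0` for an integer `n`, so `Q_p ≥ 0`).
-/

open Real Matrix

noncomputable section

/-- The supersymmetric Killing covector `V♭` of the 3-charge microstate geometry in
coordinates `(t, z, r, θ, ψ, φ)`, with `C = −√(Q₁Q₂)aη`. -/
def Vflat (Q₁ Q₂ Rz : ℝ) (n : ℤ) (r θ : ℝ) : Fin 6 → ℝ :=
  let f := fP Q₁ Q₂ Rz n r θ
  let h := hP Q₁ Q₂ Rz n r θ
  let C := -(Real.sqrt (Q₁ * Q₂) * aP Q₁ Q₂ Rz * etaP Q₁ Q₂ Rz n)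
  ![-(1/h), 1/h, 0, 0, C * Real.cos θ ^ 2 / (h * f), C * Real.sin θ ^ 2 / (h * f)]

/-- The rotation two-form `Ω = dV♭` of the null geodesic congruence tangent to
`V = ∂_t + ∂_z`, as an antisymmetric 6×6 matrix in coordinates `(t, z, r, θ, ψ, φ)`. -/
def Omega3charge (Q₁ Q₂ Rz : ℝ) (n : ℤ) (r θ : ℝ) : Matrix (Fin 6) (Fin 6) ℝ :=
  let a := aP Q₁ Q₂ Rz
  let η := etaP Q₁ Q₂ Rz n
  let f := fP Q₁ Q₂ Rz n r θ
  let h := hP Q₁ Q₂ Rz n r θ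
  let C := -(Real.sqrt (Q₁ * Q₂) * a * η)
  let K := ((Q₁ + Q₂) * f + 2 * Q₁ * Q₂) / (h * f) ^ 3
  let L := (2 * f + Q₁ + Q₂) / (h * f) ^ 3
  let s := Real.sin θ
  let c := Real.cos θ
  let Ω02 := K * r / 2
  let Ω03 := -(K * a ^ 2 * η * (2 * (n : ℝ) + 1) * s * c) / 2
  let Ω24 := -(C * L * r * c ^ 2) / 2
  let Ω25 := -(C * L * r * s ^ 2) / 2
  let Ω34 := -(C * s * c * (2 / (h * f) - a ^ 2 * η * (2 * (n : ℝ) + 1) * L * c ^ 2)) / 2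
  let Ω35 := -(C * s * c * (-(2 / (h * f)) - a ^ 2 * η * (2 * (n : ℝ) + 1) * L * s ^ 2)) / 2
  ![![0, 0, Ω02, Ω03, 0, 0],
    ![0, 0, -Ω02, -Ω03, 0, 0],
    ![-Ω02, Ω02, 0, 0, Ω24, Ω25],
    ![-Ω03, Ω03, 0, 0, Ω34, Ω35],
    ![0, 0, -Ω24, -Ω34, 0, 0],
    ![0, 0, -Ω25, -Ω35, 0, 0]]

def rotationForm (α β γ δ ε ζ : ℝ) : Matrix (Fin 6) (Fin 6) ℝ :=
  ![![0, 0, α, β, 0, 0],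
    ![0, 0, -α, -β, 0, 0],
    ![-α, α, 0, 0, γ, δ],
    ![-β, β, 0, 0, ε, ζ],
    ![0, 0, -γ, -ε, 0, 0],
    ![0, 0, -δ, -ζ, 0, 0]]

theorem rotationForm_mulVec (α β γ δ ε ζ : ℝ) (X : Fin 6 → ℝ) :
    rotationForm α β γ δ ε ζ *ᵥ X =
      ![α * X 2 + β * X 3, -(α * X 2 + β * X 3), α * (X 1 - X 0) + γ * X 4 + δ * X 5,
        β * (X 1 - X 0) + ε * X 4 + ζ * X 5, -(γ * X 2 + ε * X 3), -(δ * X 2 + ζ * X 3)] := by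
  ext i
  fin_cases i <;>
    simp only [rotationForm, mulVec, dotProduct, Fin.sum_univ_six, Fin.zero_eta, Fin.mk_one,
      Fin.reduceFinMk, Fin.isValue, cons_val, cons_val', cons_val_zero, cons_val_one,
      cons_val_fin_one] <;>
    ring

theorem eq_smul_of_rotationForm_mulVec {α β γ δ ε ζ u p q l : ℝ} {X : Fin 6 → ℝ}
    (hdet : !![α, γ, δ; β, ε, ζ; u, p, q].det ≠ 0)
    (horth : ![-u, u, 0, 0, p, q] ⬝ᵥ X = 0)
    (hΩ : ∀ i, (rotationForm α β γ δ ε ζ *ᵥ X) i = l * ![-u, u, 0, 0, p, q] i) :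
    X = X 0 • ![1, 1, 0, 0, 0, 0] := by
  rw [rotationForm_mulVec] at hΩ
  replace horth : -u * X 0 + u * X 1 + 0 * X 2 + 0 * X 3 + p * X 4 + q * X 5 = 0 := by
    rwa [dotProduct, Fin.sum_univ_six] at horth
  have e0 : α * X 2 + β * X 3 = l * -u := hΩ 0
  have e2 : α * (X 1 - X 0) + γ * X 4 + δ * X 5 = l * 0 := hΩ 2
  have e3 : β * (X 1 - X 0) + ε * X 4 + ζ * X 5 = l * 0 := hΩ 3
  have e4 : -(γ * X 2 + ε * X 3) = l * p := hΩ 4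
  have e5 : -(δ * X 2 + ζ * X 3) = l * q := hΩ 5
  have hv : ![X 1 - X 0, X 4, X 5] = 0 := by
    refine eq_zero_of_mulVec_eq_zero hdet ?_
    have e6 : u * (X 1 - X 0) + p * X 4 + q * X 5 = 0 := by linear_combination horth
    simp only [cons_mulVec, empty_mulVec, vec3_dotProduct', e2, e3, e6, mul_zero,
      cons_eq_zero_iff, zero_empty, and_self]
  have hw : ![X 2, X 3, l] = 0 := by
    refine eq_zero_of_vecMul_eq_zero hdet ?_
    have e0' : X 2 * α + (X 3 * β + l * u) = 0 := by linear_combination e0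
    have e4' : X 2 * γ + (X 3 * ε + l * p) = 0 := by linear_combination -e4
    have e5' : X 2 * δ + (X 3 * ζ + l * q) = 0 := by linear_combination -e5
    simp only [vecMul_cons, head_cons, smul_cons, smul_eq_mul, smul_empty, tail_cons,
      empty_vecMul, add_zero, add_cons, empty_add_empty, e0', e4', e5', cons_eq_zero_iff,
      zero_empty, and_self]
  obtain ⟨h10, h4, h5⟩ : X 1 - X 0 = 0 ∧ X 4 = 0 ∧ X 5 = 0 := by simpa using hv
  obtain ⟨h2, h3, -⟩ : X 2 = 0 ∧ X 3 = 0 ∧ l = 0 := by simpa using hw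
  ext i
  fin_cases i <;> simp [h2, h3, h4, h5, sub_eq_zero.mp h10]

/- Neither `β` nor `B` survives: their contributions cancel in pairs. -/
theorem det_rotationBlock {K L C B β m h r s c : ℝ} (hsc : s ^ 2 + c ^ 2 = 1) (hm : m ≠ 0)
    (hh : h ≠ 0) :
    !![K * r / 2, -(C * L * r * c ^ 2) / 2, -(C * L * r * s ^ 2) / 2;
       β, -(C * s * c * (2 / m - B * L * c ^ 2)) / 2,
         -(C * s * c * (-(2 / m) - B * L * s ^ 2)) / 2;
       1 / h, C * c ^ 2 / m, C * s ^ 2 / m].det =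
      -(C ^ 2 * r * s * c * (K / m + L / h)) / (2 * m) := by
  simp only [det_fin_three, of_apply, cons_val', cons_val_zero, cons_val_one, cons_val,
    cons_val_fin_one, Fin.isValue]
  field_simp
  linear_combination (-2 * r * C ^ 2 * s * c * (K * h + m * L)) * hsc

theorem Int.mul_add_one_nonneg (n : ℤ) : 0 ≤ n * (n + 1) := by
  rcases le_or_gt 0 n with h | h <;> nlinarith

section Positivity

variable {Q₁ Q₂ Rz : ℝ} {n : ℤ} {r θ : ℝ}

theorem aP_pos (hQ₁ : 0 < Q₁) (hQ₂ : 0 < Q₂) (hRz : 0 < Rz) : 0 < aP Q₁ Q₂ Rz := by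
  unfold aP
  positivity

theorem QpP_nonneg : 0 ≤ QpP Q₁ Q₂ Rz n := by
  have hn : (0 : ℝ) ≤ n * (n + 1) := by exact_mod_cast Int.mul_add_one_nonneg n
  unfold QpP
  rw [mul_assoc]
  positivity

theorem etaP_pos (hQ₁ : 0 < Q₁) (hQ₂ : 0 < Q₂) : 0 < etaP Q₁ Q₂ Rz n := by
  have := @QpP_nonneg Q₁ Q₂ Rz n
  unfold etaP
  positivity

theorem hP_pos (hQ₁ : 0 < Q₁) (hQ₂ : 0 < Q₂) (hf : 0 < fP Q₁ Q₂ Rz n r θ) :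
    0 < hP Q₁ Q₂ Rz n r θ := by
  unfold hP
  positivity

end Positivity

/-- Non-degeneracy of the rotation two-form `Ω` of the null congruence tangent to `V`
on the quotient of the `V♭`-orthogonal complement by the span of `V`: any `X` with
`V♭·X = 0` and `Ω·X ∝ V♭` is a multiple of `V`. -/
theorem stmt7 (Q₁ Q₂ Rz : ℝ) (n : ℤ) (r θ : ℝ)
    (hQ₁ : 0 < Q₁) (hQ₂ : 0 < Q₂) (hRz : 0 < Rz)
    (hr : 0 < r) (hθ : θ ∈ Set.Ioo 0 (π/2)) (hf : 0 < fP Q₁ Q₂ Rz n r θ)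
    (X : Fin 6 → ℝ)
    (hX : Vflat Q₁ Q₂ Rz n r θ ⬝ᵥ X = 0)
    (hΩX : ∃ l : ℝ, ∀ a : Fin 6,
      (Omega3charge Q₁ Q₂ Rz n r θ).mulVec X a = l * Vflat Q₁ Q₂ Rz n r θ a) :
    ∃ c : ℝ, X = c • (![1, 1, 0, 0, 0, 0] : Fin 6 → ℝ) := by
  obtain ⟨l, hl⟩ := hΩX
  -- `Omega3charge` and `Vflat` unfold to instances of `rotationForm` and `![-u, u, 0, 0, p, q]`.
  refine ⟨X 0, eq_smul_of_rotationForm_mulVec ?_ hX hl⟩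
  have ha := aP_pos hQ₁ hQ₂ hRz
  have hη := etaP_pos (Rz := Rz) (n := n) hQ₁ hQ₂
  have hh := hP_pos hQ₁ hQ₂ hf
  have hs : 0 < sin θ := sin_pos_of_pos_of_lt_pi hθ.1 (by linarith [hθ.2, pi_pos])
  have hc : 0 < cos θ := cos_pos_of_mem_Ioo ⟨by linarith [hθ.1, pi_pos], hθ.2⟩
  rw [det_rotationBlock (sin_sq_add_cos_sq θ) (by positivity) hh.ne']
  have hC : -(√(Q₁ * Q₂) * aP Q₁ Q₂ Rz * etaP Q₁ Q₂ Rz n) ≠ 0 :=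
    neg_ne_zero.mpr (by positivity)
  rw [neg_div, neg_ne_zero]
  positivity

end
end

section
/- Let α > 0 and let a, b, c be real numbers with 1 + a > 0, c ≥ 0, and a + b/α² + c/α⁴ ≥ 0. Set ν = √(1+a), β = √(a + b/α² + c/α⁴), σ = √c/α², ã = (1 − ν + β + σ)/2, b̃ = (1 + ν + β + σ)/2, c̃ = 1 + σ. Define Φ : (0, α) → ℝ by Φ(y) = y^σ · (y² + α²)^{β/2} · ₂F₁(ã, b̃; c̃; −y²/α²). Then Φ is twice differentiable on (0, α) and satisfies y(y² + α²)·d/dy[ y(y² + α²)·Φ′(y) ] − (a·y⁴ − b·y² + c)·Φ(y) = 0 for every y ∈ (0, α). -/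
/-!
Put `x = -y²/α²`. The operator `L = y(y²+α²) d/dy` becomes `2α² x(1-x) d/dx`, and the prefactor
`P = y^σ (y²+α²)^{β/2}` satisfies `L P = q P` with `q = σ(y²+α²) + βy²`, so
`L (P g) = P (q g + L g)`. Applying this twice, the radial operator applied to `P · F(x)` is
`-4y²(y²+α²) P` times Gauss's hypergeometric operator with parameters `ã, b̃, c̃` applied to `F`
at `x`; the choice of `ν, β, σ` is exactly what makes the coefficients match. The hypergeometric
equation for `₂F₁` is checked on its power series: the series has radius at least `1` when `c̃` is
not a non-positive integer, it can be differentiated termwise, with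
`₂F₁' = (ab/c) ₂F₁(a+1, b+1; c+1)`, and the coefficients satisfy
`u (n+1) (n+1)(c+n) = u n (a+n)(b+n)`.
-/

noncomputable def hyp2F1 (a b c x : ℝ) : ℝ :=
  ∑' k : ℕ, ((ascPochhammer ℝ k).eval a * (ascPochhammer ℝ k).eval b /
    ((ascPochhammer ℝ k).eval c * (k.factorial : ℝ))) * x ^ k

open Set Filter Topology FormalMultilinearSeries

theorem FormalMultilinearSeries.hasDerivAt_ofScalarsSum {𝕜 : Type*} [NontriviallyNormedField 𝕜]
    [CompleteSpace 𝕜] (c : ℕ → 𝕜) {x : 𝕜} (hx : ‖x‖ₑ < (ofScalars 𝕜 c).radius) :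
    HasDerivAt (ofScalarsSum c) (∑' n, (n + 1) * c (n + 1) * x ^ n) x := by
  set p := ofScalars 𝕜 c
  have hterm (n : ℕ) : p.derivSeries n (fun _ ↦ x) 1 = (n + 1) * c (n + 1) * x ^ n := by
    rw [apply_eq_pow_smul_coeff]
    simp [p, coeff_ofScalars]
    ring
  have hx' : x ∈ Metric.eball 0 p.derivSeries.radius := by
    simpa using hx.trans_le p.radius_le_radius_derivSeries
  have hsum := (p.derivSeries.hasSum hx').mapL (ContinuousLinearMap.apply 𝕜 𝕜 1)
  simp only [ContinuousLinearMap.apply_apply, hterm] at hsum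
  exact (p.hasFDerivAt_sum hx).hasDerivAt.congr_deriv hsum.tsum_eq.symm

theorem hypergeometricEquation_of_hasSum {𝕂 : Type*} [NormedField 𝕂] {a b c x F F' F'' : 𝕂}
    {u : ℕ → 𝕂} (hrec : ∀ n : ℕ, u (n + 1) * ((n + 1) * (c + n)) = u n * ((a + n) * (b + n)))
    (h0 : HasSum (fun n ↦ u n * x ^ n) F)
    (h1 : HasSum (fun n ↦ (n + 1) * u (n + 1) * x ^ n) F')
    (h2 : HasSum (fun n ↦ (n + 2) * (n + 1) * u (n + 2) * x ^ n) F'') :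
    x * (1 - x) * F'' + (c - (a + b + 1) * x) * F' - a * b * F = 0 := by
  have hxF' : HasSum (fun n : ℕ ↦ n * u n * x ^ n) (x * F') := by
    have h := HasSum.zero_add (f := fun n : ℕ ↦ n * u n * x ^ n)
      ((h1.mul_left x).congr_fun fun n ↦ by push_cast; ring)
    simpa using h
  have hxF'' : HasSum (fun n : ℕ ↦ n * ((n + 1) * u (n + 1)) * x ^ n) (x * F'') := by
    have h := HasSum.zero_add (f := fun n : ℕ ↦ n * ((n + 1) * u (n + 1)) * x ^ n)
      ((h2.mul_left x).congr_fun fun n ↦ by push_cast; ring)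
    simpa using h
  have hx2F'' : HasSum (fun n : ℕ ↦ n * (n - 1) * u n * x ^ n) (x ^ 2 * F'') := by
    have h := (hasSum_nat_add_iff (f := fun n : ℕ ↦ n * (n - 1) * u n * x ^ n) 2).mp
      ((h2.mul_left (x ^ 2)).congr_fun fun n ↦ by push_cast; ring)
    simpa [Finset.sum_range_succ] using h
  have hcomb := ((((h1.mul_left c).add hxF'').sub hx2F'').sub (hxF'.mul_left (a + b + 1))).sub
    (h0.mul_left (a * b))
  have hterm (n : ℕ) : c * ((n + 1) * u (n + 1) * x ^ n) + n * ((n + 1) * u (n + 1)) * x ^ n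
      - n * (n - 1) * u n * x ^ n - (a + b + 1) * (n * u n * x ^ n) - a * b * (u n * x ^ n)
      = 0 := by
    linear_combination x ^ n * hrec n
  simp only [hterm] at hcomb
  linear_combination hcomb.unique hasSum_zero

theorem natCast_ne_neg_add_one {R : Type*} [CommRing R] {c : R} (hc : ∀ k : ℕ, (k : R) ≠ -c)
    (k : ℕ) : (k : R) ≠ -(c + 1) :=
  fun h ↦ hc (k + 1) (by push_cast; linear_combination h)

section Coefficients

variable {𝕂 : Type*} [Field 𝕂] [CharZero 𝕂]

open Polynomial in
theorem ordinaryHypergeometricCoefficient_succ (a b c : 𝕂) (n : ℕ) :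
    (n + 1) * ordinaryHypergeometricCoefficient a b c (n + 1) =
      a * b / c * ordinaryHypergeometricCoefficient (a + 1) (b + 1) (c + 1) n := by
  simp only [ordinaryHypergeometricCoefficient, ascPochhammer_succ_left, eval_mul, eval_X,
    eval_comp, eval_add, eval_one, Nat.factorial_succ, Nat.cast_mul, Nat.cast_succ, mul_inv]
  have : (n + 1 : 𝕂) ≠ 0 := n.cast_add_one_ne_zero
  field_simp

theorem ordinaryHypergeometricCoefficient_succ_mul (a b : 𝕂) {c : 𝕂}
    (hc : ∀ k : ℕ, (k : 𝕂) ≠ -c) (n : ℕ) :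
    ordinaryHypergeometricCoefficient a b c (n + 1) * ((n + 1) * (c + n)) =
      ordinaryHypergeometricCoefficient a b c n * ((a + n) * (b + n)) := by
  have hpoch : (ascPochhammer 𝕂 n).eval c ≠ 0 := by
    simpa [ascPochhammer_eval_eq_zero_iff] using fun k _ ↦ hc k
  have hcn : c + n ≠ 0 := fun h ↦ hc n (eq_neg_of_add_eq_zero_right h)
  simp only [ordinaryHypergeometricCoefficient, ascPochhammer_succ_eval, Nat.factorial_succ,
    Nat.cast_mul, Nat.cast_succ, mul_inv]
  have : (n + 1 : 𝕂) ≠ 0 := n.cast_add_one_ne_zero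
  field_simp

end Coefficients

noncomputable def gaussHypergeometricOperator {𝕂 : Type*} [NontriviallyNormedField 𝕂]
    (a b c : 𝕂) (F : 𝕂 → 𝕂) (x : 𝕂) : 𝕂 :=
  x * (1 - x) * deriv (deriv F) x + (c - (a + b + 1) * x) * deriv F x - a * b * F x

section GaussHypergeometric

variable {𝕂 : Type*} [RCLike 𝕂] (a b : 𝕂) {c : 𝕂}

theorem one_le_ordinaryHypergeometricSeries_radius (hc : ∀ k : ℕ, (k : 𝕂) ≠ -c) :
    1 ≤ (ordinaryHypergeometricSeries 𝕂 a b c).radius := by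
  by_cases ha : ∃ k : ℕ, (k : 𝕂) = -a
  · obtain ⟨k, hk⟩ := ha
    rw [show a = -(k : 𝕂) by rw [hk, neg_neg], ordinaryHypergeometric_radius_top_of_neg_nat₁]
    exact le_top
  by_cases hb : ∃ k : ℕ, (k : 𝕂) = -b
  · obtain ⟨k, hk⟩ := hb
    rw [show b = -(k : 𝕂) by rw [hk, neg_neg], ordinaryHypergeometric_radius_top_of_neg_nat₂]
    exact le_top
  push Not at ha hb
  exact (ordinaryHypergeometricSeries_radius_eq_one 𝕂 a b c fun k ↦ ⟨ha k, hb k, hc k⟩).ge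

theorem enorm_lt_ordinaryHypergeometricSeries_radius (hc : ∀ k : ℕ, (k : 𝕂) ≠ -c) {x : 𝕂}
    (hx : ‖x‖ < 1) : ‖x‖ₑ < (ordinaryHypergeometricSeries 𝕂 a b c).radius := by
  refine lt_of_lt_of_le ?_ (one_le_ordinaryHypergeometricSeries_radius a b hc)
  rw [← ofReal_norm]
  exact ENNReal.ofReal_lt_one.mpr hx

theorem hasSum_ordinaryHypergeometric (hc : ∀ k : ℕ, (k : 𝕂) ≠ -c) {x : 𝕂} (hx : ‖x‖ < 1) :
    HasSum (fun n ↦ ordinaryHypergeometricCoefficient a b c n * x ^ n) (₂F₁ a b c x) := by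
  have hmem : x ∈ Metric.eball (0 : 𝕂) (ordinaryHypergeometricSeries 𝕂 a b c).radius := by
    simpa [edist_zero_right] using enorm_lt_ordinaryHypergeometricSeries_radius a b hc hx
  exact ((ordinaryHypergeometricSeries 𝕂 a b c).hasSum hmem).congr_fun fun n ↦ by
    rw [ordinaryHypergeometricSeries_apply_eq, smul_eq_mul]

theorem hasDerivAt_ordinaryHypergeometric (hc : ∀ k : ℕ, (k : 𝕂) ≠ -c) {x : 𝕂} (hx : ‖x‖ < 1) :
    HasDerivAt (₂F₁ a b c) (a * b / c * ₂F₁ (a + 1) (b + 1) (c + 1) x) x := by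
  have hc' := natCast_ne_neg_add_one hc
  refine (hasDerivAt_ofScalarsSum _
    (enorm_lt_ordinaryHypergeometricSeries_radius a b hc hx)).congr_deriv ?_
  rw [← ((hasSum_ordinaryHypergeometric _ _ hc' hx).mul_left (a * b / c)).tsum_eq]
  congr 1 with n
  rw [ordinaryHypergeometricCoefficient_succ]
  ring

theorem deriv_ordinaryHypergeometric_eventuallyEq (hc : ∀ k : ℕ, (k : 𝕂) ≠ -c) {x : 𝕂}
    (hx : ‖x‖ < 1) :
    deriv (₂F₁ a b c) =ᶠ[𝓝 x] fun z ↦ a * b / c * ₂F₁ (a + 1) (b + 1) (c + 1) z := by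
  filter_upwards [(isOpen_lt continuous_norm continuous_const).mem_nhds hx] with z hz
  exact (hasDerivAt_ordinaryHypergeometric a b hc hz).deriv

theorem differentiableAt_deriv_ordinaryHypergeometric (hc : ∀ k : ℕ, (k : 𝕂) ≠ -c) {x : 𝕂}
    (hx : ‖x‖ < 1) : DifferentiableAt 𝕂 (deriv (₂F₁ a b c)) x := by
  have hc' := natCast_ne_neg_add_one hc
  rw [(deriv_ordinaryHypergeometric_eventuallyEq a b hc hx).differentiableAt_iff]
  exact ((hasDerivAt_ordinaryHypergeometric _ _ hc' hx).const_mul _).differentiableAt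

theorem gaussHypergeometricOperator_ordinaryHypergeometric (hc : ∀ k : ℕ, (k : 𝕂) ≠ -c) {x : 𝕂}
    (hx : ‖x‖ < 1) : gaussHypergeometricOperator a b c (₂F₁ a b c) x = 0 := by
  have hc' := natCast_ne_neg_add_one hc
  have hc'' := natCast_ne_neg_add_one hc'
  have hderiv := deriv_ordinaryHypergeometric_eventuallyEq a b hc hx
  have h1 := (hasSum_ordinaryHypergeometric (a + 1) (b + 1) hc' hx).mul_left (a * b / c)
  have h2 := ((hasSum_ordinaryHypergeometric (a + 1 + 1) (b + 1 + 1) hc'' hx).mul_left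
    ((a + 1) * (b + 1) / (c + 1))).mul_left (a * b / c)
  rw [gaussHypergeometricOperator, hderiv.deriv_eq, hderiv.self_of_nhds,
    ((hasDerivAt_ordinaryHypergeometric (a + 1) (b + 1) hc' hx).const_mul (a * b / c)).deriv]
  refine hypergeometricEquation_of_hasSum (ordinaryHypergeometricCoefficient_succ_mul a b hc)
    (hasSum_ordinaryHypergeometric a b hc hx) (h1.congr_fun fun n ↦ ?_) (h2.congr_fun fun n ↦ ?_)
  · rw [ordinaryHypergeometricCoefficient_succ]
    ring
  · have h := ordinaryHypergeometricCoefficient_succ a b c (n + 1)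
    have h' := ordinaryHypergeometricCoefficient_succ (a + 1) (b + 1) (c + 1) n
    push_cast at h
    linear_combination (n + 1 : 𝕂) * x ^ n * h + a * b / c * x ^ n * h'

end GaussHypergeometric

theorem hyp2F1_eq_ordinaryHypergeometric (a b c : ℝ) : hyp2F1 a b c = ₂F₁ a b c := by
  ext x
  rw [hyp2F1, ordinaryHypergeometric_eq_tsum]
  congr 1 with n
  rw [smul_eq_mul, div_eq_mul_inv, mul_inv]
  ring

section Prefactor

variable {α σ β y : ℝ}

theorem hasDerivAt_rpow_mul_rpow (hy : 0 < y) :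
    HasDerivAt (fun z ↦ z ^ σ * (z ^ 2 + α ^ 2) ^ (β / 2))
      (y ^ σ * (y ^ 2 + α ^ 2) ^ (β / 2) *
        ((σ * (y ^ 2 + α ^ 2) + β * y ^ 2) / (y * (y ^ 2 + α ^ 2)))) y := by
  have hw : 0 < y ^ 2 + α ^ 2 := by positivity
  have h := (Real.hasDerivAt_rpow_const (p := σ) (Or.inl hy.ne')).mul
    (((hasDerivAt_pow 2 y).add_const (α ^ 2)).rpow_const (p := β / 2) (Or.inl hw.ne'))
  refine h.congr_deriv ?_
  rw [Real.rpow_sub_one hy.ne', Real.rpow_sub_one hw.ne']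
  field_simp
  ring

theorem hasDerivAt_rpow_mul_rpow_mul {g : ℝ → ℝ} {g' : ℝ} (hy : 0 < y) (hg : HasDerivAt g g' y) :
    HasDerivAt (fun z ↦ z ^ σ * (z ^ 2 + α ^ 2) ^ (β / 2) * g z)
      (y ^ σ * (y ^ 2 + α ^ 2) ^ (β / 2) *
        (((σ * (y ^ 2 + α ^ 2) + β * y ^ 2) * g y + y * (y ^ 2 + α ^ 2) * g') /
          (y * (y ^ 2 + α ^ 2)))) y := by
  have hw : 0 < y ^ 2 + α ^ 2 := by positivity
  refine ((hasDerivAt_rpow_mul_rpow hy).mul hg).congr_deriv ?_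
  field_simp

end Prefactor

theorem neg_sq_div_sq_mem_Ioo {α z : ℝ} (hz : z ∈ Ioo 0 α) : -(z ^ 2 / α ^ 2) ∈ Ioo (-1 : ℝ) 0 := by
  obtain ⟨hz0, hzα⟩ := hz
  have hα : 0 < α := hz0.trans hzα
  constructor
  · rw [neg_lt_neg_iff, div_lt_one (by positivity)]
    nlinarith
  · rw [neg_neg_iff_pos]
    positivity

theorem hasDerivAt_comp_neg_sq_div_sq {f : ℝ → ℝ} {α z : ℝ}
    (hf : DifferentiableAt ℝ f (-(z ^ 2 / α ^ 2))) :
    HasDerivAt (fun z ↦ f (-(z ^ 2 / α ^ 2))) (deriv f (-(z ^ 2 / α ^ 2)) * (-(2 * z / α ^ 2))) z :=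
  hf.hasDerivAt.comp z
    (((hasDerivAt_pow 2 z).div_const (α ^ 2)).fun_neg.congr_deriv (by norm_num))

theorem radialEquation_of_gaussHypergeometricOperator_eq_zero {α a b c ν β σ : ℝ} (hα : 0 < α)
    (hν : ν ^ 2 = 1 + a) (hβ : β ^ 2 = a + b / α ^ 2 + c / α ^ 4) (hσ : σ ^ 2 = c / α ^ 4)
    {F : ℝ → ℝ} (hF : ∀ x ∈ Ioo (-1) 0, DifferentiableAt ℝ F x)
    (hF' : ∀ x ∈ Ioo (-1) 0, DifferentiableAt ℝ (deriv F) x)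
    (hode : ∀ x ∈ Ioo (-1) 0,
      gaussHypergeometricOperator ((1 - ν + β + σ) / 2) ((1 + ν + β + σ) / 2) (1 + σ) F x = 0)
    {y : ℝ} (hy : y ∈ Ioo 0 α) :
    let Φ : ℝ → ℝ := fun y ↦ y ^ σ * (y ^ 2 + α ^ 2) ^ (β / 2) * F (-(y ^ 2 / α ^ 2))
    DifferentiableAt ℝ Φ y ∧ DifferentiableAt ℝ (deriv Φ) y ∧
      y * (y ^ 2 + α ^ 2) * deriv (fun z ↦ z * (z ^ 2 + α ^ 2) * deriv Φ z) y
        - (a * y ^ 4 - b * y ^ 2 + c) * Φ y = 0 := by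
  intro Φ
  have hG : ∀ z ∈ Ioo 0 α, HasDerivAt (fun z ↦ F (-(z ^ 2 / α ^ 2)))
      (deriv F (-(z ^ 2 / α ^ 2)) * (-(2 * z / α ^ 2))) z := fun z hz ↦
    hasDerivAt_comp_neg_sq_div_sq (hF _ (neg_sq_div_sq_mem_Ioo hz))
  -- `H = q G + L G` with `G = F ∘ x`, so that `L Φ = P H`
  set H : ℝ → ℝ := fun z ↦ (σ * (z ^ 2 + α ^ 2) + β * z ^ 2) * F (-(z ^ 2 / α ^ 2)) +
    z * (z ^ 2 + α ^ 2) * (deriv F (-(z ^ 2 / α ^ 2)) * (-(2 * z / α ^ 2))) with hH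
  have hΦ : ∀ z ∈ Ioo 0 α, HasDerivAt Φ
      (z ^ σ * (z ^ 2 + α ^ 2) ^ (β / 2) * (H z / (z * (z ^ 2 + α ^ 2)))) z := fun z hz ↦
    hasDerivAt_rpow_mul_rpow_mul hz.1 (hG z hz)
  have hnhds : Ioo 0 α ∈ 𝓝 y := Ioo_mem_nhds hy.1 hy.2
  have hderivΦ : deriv Φ =ᶠ[𝓝 y]
      fun z ↦ z ^ σ * (z ^ 2 + α ^ 2) ^ (β / 2) * (H z / (z * (z ^ 2 + α ^ 2))) := by
    filter_upwards [hnhds] with z hz using (hΦ z hz).deriv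
  have hwΦ : (fun z ↦ z * (z ^ 2 + α ^ 2) * deriv Φ z) =ᶠ[𝓝 y]
      fun z ↦ z ^ σ * (z ^ 2 + α ^ 2) ^ (β / 2) * H z := by
    filter_upwards [hderivΦ, hnhds] with z hz hz'
    have hz0 : z ≠ 0 := hz'.1.ne'
    have : z ^ 2 + α ^ 2 ≠ 0 := by positivity
    rw [hz]
    field_simp
  have hq : HasDerivAt (fun z ↦ σ * (z ^ 2 + α ^ 2) + β * z ^ 2) (σ * (2 * y) + β * (2 * y)) y :=
    (((hasDerivAt_pow 2 y).add_const (α ^ 2)).const_mul σ).fun_add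
      ((hasDerivAt_pow 2 y).const_mul β) |>.congr_deriv (by simp)
  have hw : HasDerivAt (fun z ↦ z * (z ^ 2 + α ^ 2)) (3 * y ^ 2 + α ^ 2) y :=
    (hasDerivAt_id y).fun_mul ((hasDerivAt_pow 2 y).add_const (α ^ 2)) |>.congr_deriv
      (by simp; ring)
  have hx' : HasDerivAt (fun z ↦ -(2 * z / α ^ 2)) (-(2 / α ^ 2)) y :=
    (((hasDerivAt_id y).const_mul 2).div_const (α ^ 2)).fun_neg |>.congr_deriv (by simp)
  have hHy : HasDerivAt H _ y :=
    (hq.fun_mul (hG y hy)).fun_add (hw.fun_mul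
    ((hasDerivAt_comp_neg_sq_div_sq (hF' _ (neg_sq_div_sq_mem_Ioo hy))).fun_mul hx'))
  have hPH := hasDerivAt_rpow_mul_rpow_mul (α := α) (σ := σ) (β := β) hy.1 hHy
  refine ⟨(hΦ y hy).differentiableAt, ?_, ?_⟩
  · rw [hderivΦ.differentiableAt_iff]
    have hw0 : y * (y ^ 2 + α ^ 2) ≠ 0 := by have := hy.1; positivity
    exact (hasDerivAt_rpow_mul_rpow_mul (α := α) (σ := σ) (β := β) hy.1
      (hHy.div hw hw0)).differentiableAt
  rw [hwΦ.deriv_eq, hPH.deriv]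
  have hop := hode _ (neg_sq_div_sq_mem_Ioo hy)
  unfold gaussHypergeometricOperator at hop
  obtain rfl : a = ν ^ 2 - 1 := by linarith
  obtain rfl : c = σ ^ 2 * α ^ 4 := by rw [hσ]; field_simp
  obtain rfl : b = (β ^ 2 - ν ^ 2 + 1 - σ ^ 2) * α ^ 2 := by rw [hβ]; field_simp; ring
  have hy0 := hy.1
  linear_combination (norm := skip)
    (-4 * y ^ 2 * (y ^ 2 + α ^ 2) * (y ^ σ * (y ^ 2 + α ^ 2) ^ (β / 2))) * hop
  simp only [hH, Φ]
  field_simp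
  ring

/-- The Region-1 solution `Φ(y) = y^σ (y²+α²)^{β/2} ₂F₁(ã, b̃; c̃; −y²/α²)` of the
separated radial equation of the 3-charge microstate geometries is twice
differentiable on `(0, α)` and satisfies
`y(y²+α²) d/dy[y(y²+α²) Φ′] − (a y⁴ − b y² + c) Φ = 0` there. -/
theorem stmt9 (α a b c : ℝ) (hα : 0 < α) (ha : 0 < 1 + a) (hc : 0 ≤ c)
    (habc : 0 ≤ a + b / α ^ 2 + c / α ^ 4) :
    let ν := Real.sqrt (1 + a)
    let β := Real.sqrt (a + b / α ^ 2 + c / α ^ 4)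
    let σ := Real.sqrt c / α ^ 2
    let ta := (1 - ν + β + σ) / 2
    let tb := (1 + ν + β + σ) / 2
    let tc := 1 + σ
    let Φ : ℝ → ℝ := fun y =>
      y ^ σ * (y ^ 2 + α ^ 2) ^ (β / 2) * hyp2F1 ta tb tc (-(y ^ 2 / α ^ 2))
    ∀ y ∈ Set.Ioo 0 α,
      DifferentiableAt ℝ Φ y ∧ DifferentiableAt ℝ (deriv Φ) y ∧
      y * (y ^ 2 + α ^ 2) * deriv (fun z => z * (z ^ 2 + α ^ 2) * deriv Φ z) y
        - (a * y ^ 4 - b * y ^ 2 + c) * Φ y = 0 := by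
  intro ν β σ ta tb tc Φ y hy
  have hσ : σ ^ 2 = c / α ^ 4 := by
    rw [div_pow, Real.sq_sqrt hc, ← pow_mul]
  have htc : ∀ k : ℕ, (k : ℝ) ≠ -tc := fun k h ↦ by
    have : 0 ≤ σ := by positivity
    linarith [k.cast_nonneg (α := ℝ)]
  have hunit : ∀ x ∈ Ioo (-1 : ℝ) 0, ‖x‖ < 1 := fun x hx ↦ by
    rw [Real.norm_eq_abs, abs_lt]
    exact ⟨hx.1, hx.2.trans one_pos⟩
  refine radialEquation_of_gaussHypergeometricOperator_eq_zero (F := hyp2F1 ta tb tc) hα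
    (Real.sq_sqrt ha.le) (Real.sq_sqrt habc) hσ ?_ ?_ ?_ hy <;>
    rw [hyp2F1_eq_ordinaryHypergeometric]
  · exact fun x hx ↦ (hasDerivAt_ordinaryHypergeometric _ _ htc (hunit x hx)).differentiableAt
  · exact fun x hx ↦ differentiableAt_deriv_ordinaryHypergeometric _ _ htc (hunit x hx)
  · exact fun x hx ↦ gaussHypergeometricOperator_ordinaryHypergeometric _ _ htc (hunit x hx)
end

section
/- Fix a natural number N, and reals μ > 0 and x > 0. For each natural number ℓ ≥ 2 set ν = ℓ + 1 and define G(ℓ) = ((N + ν)·Γ(N + 1 + ν + μℓ)·Γ(N + ν)·e^{2ν}·x^ν) / (N!·ν·Γ(N + 1 + μℓ)·Γ(ν)²·ν^{2ν}), where Γ is the real Gamma function. Then the quantity log G(ℓ) − [ −2ℓ·log ℓ + ℓ·(2 − μ·log μ + (1+μ)·log(1+μ) + log x) + (N − 3/2)·log ℓ ] remains bounded as ℓ → ∞. -/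
/-!
Stirling's formula to order `O(1)` is enough: `R(y) = log Γ(y) - ((y - 1/2) log y - y)` is bounded
on `[1, ∞)`. Indeed `R(y) - R(y + 1) = (y + 1/2) log (1 + 1/y) - 1` lies in
`[0, 1/(4y) - 1/(4(y + 1))]`, as the series of `log (1 + 1/y)` in odd powers of `1/(2y + 1)` shows;
so along `y + ℕ` the function `R` decreases while `R - 1/(4y)` increases, and `R` is bounded on the
compact interval `[1, 2]`. Every Gamma factor of `G(ℓ)` has an argument affine in `ℓ`, and
`(aℓ + b)(log (aℓ + c) - log (aℓ)) = O(1)`, so `log G(ℓ)` differs from the claimed expansion by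
`O(1)`. Along `ℕ`, a bound for large `ℓ` is a bound for all `ℓ`.
-/

open Real Filter Asymptotics Set

noncomputable def stirlingRemainder (y : ℝ) : ℝ :=
  log (Gamma y) - ((y - 1 / 2) * log y - y)

lemma stirlingRemainder_add_one {y : ℝ} (hy : 0 < y) :
    stirlingRemainder (y + 1) = stirlingRemainder y - ((y + 1 / 2) * log (1 + y⁻¹) - 1) := by
  have hlog : log (1 + y⁻¹) = log (y + 1) - log y := by
    rw [← log_div (by positivity) hy.ne']
    congr 1
    field_simp
  simp only [stirlingRemainder, Gamma_add_one hy.ne', log_mul hy.ne' (Gamma_pos_of_pos hy).ne',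
    hlog]
  ring

lemma hasSum_mul_log_one_add_inv {y : ℝ} (hy : 0 < y) :
    HasSum (fun k : ℕ => 1 / (2 * k + 1) * ((1 / (2 * y + 1)) ^ 2) ^ k)
      ((y + 1 / 2) * log (1 + y⁻¹)) := by
  refine ((hasSum_log_one_add_inv hy).mul_left (y + 1 / 2)).congr_fun fun k => ?_
  rw [← pow_mul, pow_succ]
  field_simp

lemma one_le_mul_log_one_add_inv {y : ℝ} (hy : 0 < y) : 1 ≤ (y + 1 / 2) * log (1 + y⁻¹) := by
  simpa using le_hasSum (hasSum_mul_log_one_add_inv hy) 0 fun k _ => by positivity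

lemma mul_log_one_add_inv_le {y : ℝ} (hy : 0 < y) :
    (y + 1 / 2) * log (1 + y⁻¹) ≤ 1 + (1 / (4 * y) - 1 / (4 * (y + 1))) := by
  set r := (1 / (2 * y + 1)) ^ 2 with hr
  have hr1 : r < 1 := by
    rw [hr, div_pow, one_pow, div_lt_one (by positivity)]
    nlinarith
  have hgeom := hasSum_geometric_of_lt_one (by positivity) hr1
  have hsum : (1 - r)⁻¹ = 1 + (1 / (4 * y) - 1 / (4 * (y + 1))) := by
    have : 1 - r = 4 * y * (y + 1) / (2 * y + 1) ^ 2 := by rw [hr]; field_simp; ring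
    rw [this, inv_div]
    field_simp
    ring
  refine hsum ▸ hasSum_le (fun k => ?_) (hasSum_mul_log_one_add_inv hy) hgeom
  exact mul_le_of_le_one_left (by positivity)
    (div_le_one_of_le₀ (by linarith [k.cast_nonneg (α := ℝ)]) (by positivity))

lemma antitone_stirlingRemainder_add_nat {y : ℝ} (hy : 0 < y) :
    Antitone fun n : ℕ => stirlingRemainder (y + n) :=
  antitone_nat_of_succ_le fun n => by
    have hyn : 0 < y + n := by positivity
    rw [Nat.cast_succ, ← add_assoc, stirlingRemainder_add_one hyn]
    linarith [one_le_mul_log_one_add_inv hyn]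

lemma monotone_stirlingRemainder_sub_add_nat {y : ℝ} (hy : 0 < y) :
    Monotone fun n : ℕ => stirlingRemainder (y + n) - 1 / (4 * (y + n)) :=
  monotone_nat_of_le_succ fun n => by
    have hyn : 0 < y + n := by positivity
    rw [Nat.cast_succ, ← add_assoc, stirlingRemainder_add_one hyn]
    linarith [mul_log_one_add_inv_le hyn]

lemma exists_nat_add_mem_Icc {y : ℝ} (hy : 1 ≤ y) : ∃ n : ℕ, ∃ s ∈ Icc (1 : ℝ) 2, y = s + n := by
  have h1 : 1 ≤ ⌊y⌋₊ := Nat.le_floor (by simpa using hy)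
  refine ⟨⌊y⌋₊ - 1, y - (⌊y⌋₊ - 1 : ℕ), ⟨?_, ?_⟩, by ring⟩ <;>
    push_cast [h1] <;> linarith [Nat.floor_le (zero_le_one.trans hy), Nat.lt_floor_add_one y]

lemma continuousOn_stirlingRemainder : ContinuousOn stirlingRemainder (Ioi 0) := by
  intro y hy
  have hy : 0 < y := hy
  refine ContinuousAt.continuousWithinAt ?_
  unfold stirlingRemainder
  have hG : ContinuousAt Gamma y :=
    (differentiableAt_Gamma fun m => by linarith [m.cast_nonneg (α := ℝ)]).continuousAt
  exact (hG.log (Gamma_pos_of_pos hy).ne').sub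
    (((continuousAt_id.sub continuousAt_const).mul (continuousAt_log hy.ne')).sub continuousAt_id)

lemma isBigO_stirlingRemainder : stirlingRemainder =O[atTop] fun _ => (1 : ℝ) := by
  obtain ⟨C, hC⟩ := isCompact_Icc.exists_bound_of_continuousOn
    (continuousOn_stirlingRemainder.mono fun s (hs : s ∈ Icc (1 : ℝ) 2) =>
      (zero_lt_one.trans_le hs.1 : 0 < s))
  refine IsBigO.of_bound (C + 1 / 4) ?_
  filter_upwards [eventually_ge_atTop 1] with y hy
  obtain ⟨n, s, hs, rfl⟩ := exists_nat_add_mem_Icc hy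
  have hs0 : 0 < s := zero_lt_one.trans_le hs.1
  have hCs := abs_le.1 (hC s hs)
  have hupper : stirlingRemainder (s + n) ≤ stirlingRemainder s := by
    simpa using antitone_stirlingRemainder_add_nat hs0 n.zero_le
  have hlower : stirlingRemainder s - 1 / (4 * s) ≤
      stirlingRemainder (s + n) - 1 / (4 * (s + n)) := by
    simpa using monotone_stirlingRemainder_sub_add_nat hs0 n.zero_le
  have hquarter : 1 / (4 * s) ≤ 1 / 4 := by gcongr; linarith [hs.1]
  have hpos : 0 ≤ 1 / (4 * (s + n)) := by positivity
  rw [norm_one, mul_one, norm_eq_abs, abs_le]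
  constructor <;> linarith

lemma log_add_sub_log_le {u c : ℝ} (hu : 0 < u) (hc : 0 ≤ c) : log (u + c) - log u ≤ c / u := by
  rw [← log_div (by positivity) hu.ne']
  calc log ((u + c) / u) ≤ (u + c) / u - 1 := log_le_sub_one_of_pos (by positivity)
    _ = c / u := by field_simp; ring

lemma isBigO_log_add_sub_log {c : ℝ} (hc : 0 ≤ c) :
    (fun u => log (u + c) - log u) =O[atTop] fun u => u⁻¹ := by
  refine IsBigO.of_bound c ?_
  filter_upwards [eventually_gt_atTop 0] with u hu
  rw [norm_of_nonneg (sub_nonneg.2 (log_le_log hu (by linarith))),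
    norm_of_nonneg (inv_nonneg.2 hu.le)]
  exact (log_add_sub_log_le hu hc).trans_eq (div_eq_mul_inv _ _)

lemma isBigO_mul_log_add_sub_log (b : ℝ) {c : ℝ} (hc : 0 ≤ c) :
    (fun u => (u + b) * (log (u + c) - log u)) =O[atTop] fun _ => (1 : ℝ) := by
  have hlin : (fun u : ℝ => u + b) =O[atTop] fun u => u :=
    (isBigO_refl id atTop).add (isLittleO_const_id_atTop b).isBigO
  refine (hlin.mul (isBigO_log_add_sub_log hc)).trans_eventuallyEq ?_
  filter_upwards [eventually_ne_atTop 0] with u hu using mul_inv_cancel₀ hu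

lemma isBigO_log_Gamma_mul_add {a c : ℝ} (ha : 0 < a) (hc : 0 ≤ c) :
    (fun t => log (Gamma (a * t + c)) - ((a * t + c - 1 / 2) * (log a + log t) - a * t))
      =O[atTop] fun _ => (1 : ℝ) := by
  have hlin : Tendsto (fun t => a * t) atTop atTop := tendsto_id.const_mul_atTop ha
  have hR := isBigO_stirlingRemainder.comp_tendsto (tendsto_atTop_add_const_right _ c hlin)
  have hP := (isBigO_mul_log_add_sub_log (c - 1 / 2) hc).comp_tendsto hlin
  refine ((hR.add hP).sub (isBigO_const_one ℝ c atTop)).congr' ?_ EventuallyEq.rfl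
  filter_upwards [eventually_gt_atTop 0] with t ht
  simp only [Function.comp_apply, stirlingRemainder, log_mul ha.ne' ht.ne']
  ring

/-- `G(ℓ)` at real `t = ℓ`, with `ν = t + 1`. -/
noncomputable def qnmFactor (N : ℕ) (μ x t : ℝ) : ℝ :=
  (((N : ℝ) + (t + 1)) * Gamma ((N : ℝ) + 1 + (t + 1) + μ * t) * Gamma ((N : ℝ) + (t + 1)) *
      exp (2 * (t + 1)) * x ^ (t + 1)) /
    ((N.factorial : ℝ) * (t + 1) * Gamma ((N : ℝ) + 1 + μ * t) * Gamma (t + 1) ^ 2 *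
      (t + 1) ^ (2 * (t + 1)))

noncomputable def qnmFactorLogApprox (N : ℕ) (μ x t : ℝ) : ℝ :=
  -(2 * t * log t) + t * (2 - μ * log μ + (1 + μ) * log (1 + μ) + log x) +
    ((N : ℝ) - 3 / 2) * log t

lemma log_qnmFactor {N : ℕ} {μ x t : ℝ} (hμ : 0 < μ) (hx : 0 < x) (ht : 0 < t) :
    log (qnmFactor N μ x t) =
      log (Gamma ((1 + μ) * t + (N + 2))) + log (Gamma (t + (N + 1))) + log (t + (N + 1)) +
        2 * (t + 1) + (t + 1) * log x - log (N.factorial : ℝ) - log (t + 1) -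
        log (Gamma (μ * t + (N + 1))) - 2 * log (Gamma (t + 1)) - 2 * ((t + 1) * log (t + 1)) := by
  rw [qnmFactor, show (N : ℝ) + 1 + (t + 1) + μ * t = (1 + μ) * t + (N + 2) by ring,
    show (N : ℝ) + (t + 1) = t + (N + 1) by ring,
    show (N : ℝ) + 1 + μ * t = μ * t + (N + 1) by ring]
  simp (disch := positivity) only [log_div, log_mul, log_pow, log_rpow, log_exp]
  push_cast
  ring

lemma isBigO_log_qnmFactor_sub {N : ℕ} {μ x : ℝ} (hμ : 0 < μ) (hx : 0 < x) :
    (fun t => log (qnmFactor N μ x t) - qnmFactorLogApprox N μ x t)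
      =O[atTop] fun _ => (1 : ℝ) := by
  have hN : (0 : ℝ) ≤ N := N.cast_nonneg
  have h1 :=
    isBigO_log_Gamma_mul_add (by positivity : 0 < 1 + μ) (by positivity : (0 : ℝ) ≤ N + 2)
  have h2 := isBigO_log_Gamma_mul_add one_pos (by positivity : (0 : ℝ) ≤ N + 1)
  have h3 := isBigO_log_Gamma_mul_add hμ (by positivity : (0 : ℝ) ≤ N + 1)
  have h4 := isBigO_log_Gamma_mul_add one_pos zero_le_one
  have h5 := (isBigO_log_add_sub_log (by positivity : (0 : ℝ) ≤ N + 1)).trans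
    (tendsto_inv_atTop_zero.isBigO_one ℝ)
  have h6 := (isBigO_log_add_sub_log zero_le_one).trans (tendsto_inv_atTop_zero.isBigO_one ℝ)
  have h7 := isBigO_mul_log_add_sub_log 1 zero_le_one
  simp only [one_mul, log_one, zero_add] at h2 h4
  have hK := isBigO_const_one ℝ (((N : ℝ) + 3 / 2) * log (1 + μ) - ((N : ℝ) + 1 / 2) * log μ +
    log x + 2 - log (N.factorial : ℝ)) (atTop : Filter ℝ)
  refine ((h1.add h2).sub h3 |>.sub (h4.const_mul_left 2) |>.add h5 |>.sub h6
    |>.sub (h7.const_mul_left 2) |>.add hK).congr' ?_ EventuallyEq.rfl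
  filter_upwards [eventually_gt_atTop 0] with t ht
  rw [log_qnmFactor hμ hx ht, qnmFactorLogApprox]
  ring

lemma exists_abs_le_of_isBigO_one {u : ℕ → ℝ} (h : u =O[atTop] fun _ => (1 : ℝ)) :
    ∃ M, ∀ n, |u n| ≤ M := by
  rw [isBigO_one_iff, ← Nat.cofinite_eq_atTop] at h
  obtain ⟨M, hM⟩ := h.bddAbove_range_of_cofinite
  exact ⟨M, fun n => hM ⟨n, rfl⟩⟩

/-- Asymptotic evaluation of the Gamma-function expression controlling the imaginary
part of the quasinormal frequency: with `ν = ℓ + 1`,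
`log G(ℓ) = −2ℓ log ℓ + ℓ(2 − μ log μ + (1+μ)log(1+μ) + log x) + (N − 3/2) log ℓ + O(1)`. -/
theorem stmt11 (N : ℕ) (μ x : ℝ) (hμ : 0 < μ) (hx : 0 < x) :
    ∃ M : ℝ, ∀ ℓ : ℕ, 2 ≤ ℓ →
      |Real.log
          ((((N : ℝ) + ((ℓ : ℝ) + 1)) * Real.Gamma ((N : ℝ) + 1 + ((ℓ : ℝ) + 1) + μ * ℓ) *
              Real.Gamma ((N : ℝ) + ((ℓ : ℝ) + 1)) * Real.exp (2 * ((ℓ : ℝ) + 1)) *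
              x ^ ((ℓ : ℝ) + 1)) /
            ((N.factorial : ℝ) * ((ℓ : ℝ) + 1) * Real.Gamma ((N : ℝ) + 1 + μ * ℓ) *
              (Real.Gamma ((ℓ : ℝ) + 1)) ^ 2 * ((ℓ : ℝ) + 1) ^ (2 * ((ℓ : ℝ) + 1)))) -
        (-(2 * (ℓ : ℝ) * Real.log ℓ) +
          (ℓ : ℝ) * (2 - μ * Real.log μ + (1 + μ) * Real.log (1 + μ) + Real.log x) +
          ((N : ℝ) - 3/2) * Real.log ℓ)| ≤ M := by
  obtain ⟨M, hM⟩ := exists_abs_le_of_isBigO_one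
    ((isBigO_log_qnmFactor_sub (N := N) hμ hx).comp_tendsto tendsto_natCast_atTop_atTop)
  exact ⟨M, fun ℓ _ => hM ℓ⟩
end

section
/- For all real numbers β > 0, C > 0 and D > 0, there exist a natural number ℓ ≥ 2 and a real number t > 0 such that D·exp( −2β·exp(−2ℓ·log ℓ)·t ) > C·ℓ²·(log(2 + t))^{−2}. -/
open Real Filter

/-!
Take `t = e^{2ℓ log ℓ} / (2β)`: the decaying exponential then equals `e^{-1}` for every `ℓ`, while
`log (2 + t) ≥ 2ℓ log ℓ - log (2β)` grows faster than `ℓ`. Hence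
`C ℓ² (log (2 + t))^{-2} = C / (log (2 + t) / ℓ)²` tends to `0` and eventually drops below `D e^{-1}`.
-/

theorem neg_mul_exp_neg_mul_exp_div_self {c : ℝ} (hc : c ≠ 0) (x : ℝ) :
    -c * exp (-x) * (exp x / c) = -1 := by
  rw [exp_neg]
  field_simp

theorem sub_log_le_log_two_add_exp_div {c : ℝ} (hc : 0 < c) (x : ℝ) :
    x - log c ≤ log (2 + exp x / c) := by
  have hpos : 0 < exp x / c := by positivity
  calc x - log c = log (exp x / c) := by rw [log_div (exp_ne_zero x) hc.ne', log_exp]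
    _ ≤ log (2 + exp x / c) := log_le_log hpos (by linarith)

theorem tendsto_log_two_add_exp_div_div_atTop {c : ℝ} (hc : 0 < c) :
    Tendsto (fun n : ℕ => log (2 + exp (2 * n * log n) / c) / n) atTop atTop := by
  have hlower : ∀ n : ℕ, 1 ≤ n →
      2 * log n - |log c| ≤ log (2 + exp (2 * n * log n) / c) / n := by
    intro n hn
    have hn' : (1 : ℝ) ≤ n := by exact_mod_cast hn
    rw [le_div_iff₀ (by linarith)]
    calc (2 * log n - |log c|) * n ≤ 2 * n * log n - log c := by
          nlinarith [le_abs_self (log c), abs_nonneg (log c)]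
      _ ≤ log (2 + exp (2 * n * log n) / c) := sub_log_le_log_two_add_exp_div hc _
  have hlog : Tendsto (fun n : ℕ => 2 * log n - |log c|) atTop atTop :=
    tendsto_atTop_add_const_right _ _
      ((tendsto_log_atTop.comp tendsto_natCast_atTop_atTop).const_mul_atTop two_pos)
  exact tendsto_atTop_mono' _ ((eventually_ge_atTop 1).mono hlower) hlog

theorem mul_sq_mul_zpow_neg_two_lt {C D ℓ L : ℝ} (hC : 0 < C) (hD : 0 < D) (hℓ : ℓ ≠ 0)
    (h : exp 1 * C / D < (L / ℓ) ^ 2) : C * ℓ ^ 2 * L ^ (-2 : ℤ) < D * exp (-1) := by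
  have hq : 0 < (L / ℓ) ^ 2 := lt_trans (by positivity) h
  have hL : L ≠ 0 := by rintro rfl; simp at hq
  calc C * ℓ ^ 2 * L ^ (-2 : ℤ) = C / (L / ℓ) ^ 2 := by
        rw [zpow_neg, div_pow]
        field_simp
    _ < C / (exp 1 * C / D) := div_lt_div_of_pos_left hC (by positivity) h
    _ = D * exp (-1) := by
        rw [exp_neg]
        field_simp

/-- Quasinormal modes with `Im ω = −β e^{−2ℓ log ℓ}` are incompatible with a uniform
energy-decay estimate with rate `g(t) = (log(2+t))^{−2}`: for any constants
`β, C, D > 0` there are `ℓ ≥ 2` and `t > 0` with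
`D·exp(−2β e^{−2ℓ log ℓ} t) > C ℓ² (log(2+t))^{−2}`. -/
theorem stmt12 (β C D : ℝ) (hβ : 0 < β) (hC : 0 < C) (hD : 0 < D) :
    ∃ (ℓ : ℕ) (t : ℝ), 2 ≤ ℓ ∧ 0 < t ∧
      D * Real.exp (-(2 * β) * Real.exp (-(2 * (ℓ : ℝ) * Real.log ℓ)) * t) >
        C * (ℓ : ℝ) ^ 2 * (Real.log (2 + t)) ^ (-2 : ℤ) := by
  have hβ2 : 0 < 2 * β := by positivity
  have hsq := ((tendsto_pow_atTop two_ne_zero).comp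
    (tendsto_log_two_add_exp_div_div_atTop hβ2)).eventually_gt_atTop (exp 1 * C / D)
  obtain ⟨ℓ, hℓ, hlarge⟩ := ((eventually_ge_atTop 2).and hsq).exists
  refine ⟨ℓ, exp (2 * ℓ * log ℓ) / (2 * β), hℓ, by positivity, ?_⟩
  rw [neg_mul_exp_neg_mul_exp_div_self hβ2.ne']
  exact mul_sq_mul_zpow_neg_two_lt hC hD (by positivity) hlarge
end

section
/- Let d be a natural number, let Ω and H be real d×d matrices with Ω antisymmetric and H symmetric positive semidefinite, and let y : ℝ → ℝ^d be twice differentiable with y″(t) + 2Ω·y′(t) + H·y(t) = 0 for all t ∈ ℝ. Then for every t ∈ ℝ: ⟨y(t), H·y(t)⟩ ≤ ‖y′(0)‖² + ⟨y(0), H·y(0)⟩ and ‖y′(t)‖² ≤ ‖y′(0)‖² + ⟨y(0), H·y(0)⟩. -/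
/-!
The energy `‖y′‖² + ⟨y, H y⟩` is conserved along solutions: differentiating it and substituting
the equation leaves `-4 ⟨y′, Ω y′⟩`, which vanishes since Ω is antisymmetric (the gyroscopic
term does no work), while the symmetry of H cancels the two cross terms. As both summands are
nonnegative, each is bounded by the conserved total.
-/

open Matrix

section Derivatives

variable {n m : Type*} [Fintype n] {u v : ℝ → n → ℝ} {u' v' : n → ℝ} {t : ℝ}

theorem HasDerivAt.dotProduct (hu : HasDerivAt u u' t) (hv : HasDerivAt v v' t) :
    HasDerivAt (fun s => u s ⬝ᵥ v s) (u' ⬝ᵥ v t + u t ⬝ᵥ v') t := by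
  have : HasDerivAt (fun s => ∑ i, u s i * v s i) (∑ i, (u' i * v t i + u t i * v' i)) t :=
    .fun_sum fun i _ => (hasDerivAt_pi.mp hu i).mul (hasDerivAt_pi.mp hv i)
  simpa [_root_.dotProduct, Finset.sum_add_distrib] using this

theorem HasDerivAt.mulVec (A : Matrix m n ℝ) (hu : HasDerivAt u u' t) :
    HasDerivAt (fun s => A *ᵥ u s) (A *ᵥ u') t :=
  hasDerivAt_pi.mpr fun i => by
    have : HasDerivAt (fun s => ∑ j, A i j * u s j) (∑ j, A i j * u' j) t :=
      .fun_sum fun j _ => (hasDerivAt_pi.mp hu j).const_mul (A i j)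
    simpa [Matrix.mulVec, _root_.dotProduct] using this

end Derivatives

namespace Matrix

variable {n R : Type*} [Fintype n] [CommRing R]

theorem dotProduct_mulVec_self_eq_zero_of_transpose_eq_neg [IsAddTorsionFree R]
    {Ω : Matrix n n R} (hΩ : Ωᵀ = -Ω) (v : n → R) : v ⬝ᵥ Ω *ᵥ v = 0 :=
  self_eq_neg.mp <| calc
    v ⬝ᵥ Ω *ᵥ v = Ωᵀ *ᵥ v ⬝ᵥ v := by rw [dotProduct_mulVec, mulVec_transpose]
    _ = -(v ⬝ᵥ Ω *ᵥ v) := by rw [hΩ, neg_mulVec, neg_dotProduct, dotProduct_comm]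

theorem IsSymm.dotProduct_mulVec_comm {H : Matrix n n R} (hH : H.IsSymm) (v w : n → R) :
    v ⬝ᵥ H *ᵥ w = w ⬝ᵥ H *ᵥ v := by
  rw [dotProduct_mulVec, ← mulVec_transpose, hH.eq, dotProduct_comm]

end Matrix

section Energy

variable {n : Type*} [Fintype n] {Ω H : Matrix n n ℝ} {y y' y'' : ℝ → n → ℝ}

theorem hasDerivAt_energy_eq_zero (hΩ : Ωᵀ = -Ω) (hH : H.IsSymm) {t : ℝ}
    (hy : HasDerivAt y (y' t) t) (hy' : HasDerivAt y' (y'' t) t)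
    (hode : y'' t + (2 : ℝ) • Ω *ᵥ y' t + H *ᵥ y t = 0) :
    HasDerivAt (fun s => y' s ⬝ᵥ y' s + y s ⬝ᵥ H *ᵥ y s) 0 t := by
  refine ((hy'.dotProduct hy').add (hy.dotProduct (hy.mulVec H))).congr_deriv ?_
  have hy'' : y'' t = -((2 : ℝ) • Ω *ᵥ y' t + H *ᵥ y t) :=
    eq_neg_of_add_eq_zero_left (by rwa [add_assoc] at hode)
  rw [dotProduct_comm (y'' t), hy'', hH.dotProduct_mulVec_comm (y t) (y' t)]
  simp only [dotProduct_neg, dotProduct_add, dotProduct_smul, smul_eq_mul,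
    dotProduct_mulVec_self_eq_zero_of_transpose_eq_neg hΩ]
  ring

theorem energy_eq_energy_zero (hΩ : Ωᵀ = -Ω) (hH : H.IsSymm)
    (hy : ∀ t, HasDerivAt y (y' t) t) (hy' : ∀ t, HasDerivAt y' (y'' t) t)
    (hode : ∀ t, y'' t + (2 : ℝ) • Ω *ᵥ y' t + H *ᵥ y t = 0) (t : ℝ) :
    y' t ⬝ᵥ y' t + y t ⬝ᵥ H *ᵥ y t = y' 0 ⬝ᵥ y' 0 + y 0 ⬝ᵥ H *ᵥ y 0 :=
  have hE s := hasDerivAt_energy_eq_zero hΩ hH (hy s) (hy' s) (hode s)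
  is_const_of_deriv_eq_zero (fun s => (hE s).differentiableAt) (fun s => (hE s).deriv) t 0

end Energy

/-- Stable trapping at the level of geodesic deviation: for the deviation equation
`y″ + 2Ω y′ + H y = 0` with Ω antisymmetric and H symmetric positive semidefinite,
both `⟨y(t), H y(t)⟩` and `‖y′(t)‖²` are bounded by the initial value
`‖y′(0)‖² + ⟨y(0), H y(0)⟩`. -/
theorem stmt14 (d : ℕ) (Ω H : Matrix (Fin d) (Fin d) ℝ)
    (hΩ : Ωᵀ = -Ω) (hH : H.PosSemidef)
    (y : ℝ → (Fin d → ℝ))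
    (hy1 : Differentiable ℝ y) (hy2 : Differentiable ℝ (deriv y))
    (hode : ∀ t : ℝ,
      deriv (deriv y) t + (2 : ℝ) • Ω.mulVec (deriv y t) + H.mulVec (y t) = 0) :
    ∀ t : ℝ,
      y t ⬝ᵥ H.mulVec (y t) ≤ deriv y 0 ⬝ᵥ deriv y 0 + y 0 ⬝ᵥ H.mulVec (y 0) ∧
      deriv y t ⬝ᵥ deriv y t ≤ deriv y 0 ⬝ᵥ deriv y 0 + y 0 ⬝ᵥ H.mulVec (y 0) := by
  intro t
  have hE := energy_eq_energy_zero hΩ (isHermitian_iff_isSymm.mp hH.isHermitian)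
    (fun s => (hy1 s).hasDerivAt) (fun s => (hy2 s).hasDerivAt) hode t
  have hkin : 0 ≤ deriv y t ⬝ᵥ deriv y t := dotProduct_self_star_nonneg _
  have hpot : 0 ≤ y t ⬝ᵥ H *ᵥ y t := hH.dotProduct_mulVec_nonneg (y t)
  constructor <;> linarith
end
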